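/- The canonical transformations of ℝ^d × ℝ^d of class B form a group under composition: if κ and κ' are canonical transformations of class B, then so are the composition κ'∘κ and the inverse κ^{−1}; in particular the Jacobian of κ^{-1} satisfies F^{κ^{-1}} = (F^κ ∘ κ^{-1})^{-1} = −J (F^κ ∘ κ^{-1})† J, its supremum norm equals that of F^κ, and the supremum bounds on the derivatives of F^{κ^{-1}} (respectively F^{κ'∘κ}) are bounded by polynomials in the corresponding bounds for F^κ (respectively for F^κ and F^{κ'}). -/

import Mathlib

open MeasureTheory Filter Complex Matrix
open scoped Real Topology ComplexConjugate RealInnerProductSpace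

noncomputable section

abbrev V (d : ℕ) : Type := EuclideanSpace ℝ (Fin d)
abbrev PS (d : ℕ) : Type := V d × V d

/-- The standard symplectic form on `ℝ^d × ℝ^d`. -/
def symForm (d : ℕ) (v w : PS d) : ℝ := (inner ℝ v.1 w.2 : ℝ) - (inner ℝ v.2 w.1 : ℝ)

/-- A canonical transformation: a smooth diffeomorphism of `ℝ^d × ℝ^d` whose Jacobian is
symplectic at every point. -/
structure IsCanonical (d : ℕ) (κ : PS d → PS d) : Prop where
  bij : Function.Bijective κ
  smooth : ContDiff ℝ (⊤ : ℕ∞) κ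
  smooth_inv : ContDiff ℝ (⊤ : ℕ∞) (Function.invFun κ)
  symp : ∀ z v w, symForm d (fderiv ℝ κ z v) (fderiv ℝ κ z w) = symForm d v w

/-- A canonical transformation of class `𝓑`: its Jacobian matrix and all derivatives thereof
are globally bounded. -/
structure IsClassB (d : ℕ) (κ : PS d → PS d) extends IsCanonical d κ : Prop where
  derivBound : ∀ n : ℕ, 1 ≤ n → ∃ C : ℝ, ∀ z, ‖iteratedFDeriv ℝ n κ z‖ ≤ C

/-- An action associated to a canonical transformation:
`∇_q S = -p + X_q Ξ`, `∇_p S = X_p Ξ`. -/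
def IsAction {d : ℕ} (κ : PS d → PS d) (S : PS d → ℝ) : Prop :=
  ContDiff ℝ (⊤ : ℕ∞) S ∧
    ∀ z v, fderiv ℝ S z v = (inner ℝ (κ z).2 ((fderiv ℝ κ z v).1) : ℝ) - (inner ℝ z.2 v.1 : ℝ)

def reM {d : ℕ} (Θ : Matrix (Fin d) (Fin d) ℂ) : Matrix (Fin d) (Fin d) ℝ := Θ.map Complex.re
def imM {d : ℕ} (Θ : Matrix (Fin d) (Fin d) ℂ) : Matrix (Fin d) (Fin d) ℝ := Θ.map Complex.im
def conjM {d : ℕ} (Θ : Matrix (Fin d) (Fin d) ℂ) : Matrix (Fin d) (Fin d) ℂ :=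
  Θ.map (starRingEnd ℂ)

/-- A complex symmetric matrix with positive definite real part. -/
def GoodTheta {d : ℕ} (Θ : Matrix (Fin d) (Fin d) ℂ) : Prop := Θ.IsSymm ∧ (reM Θ).PosDef

/-- The quadratic form `v ⋅ Θ v` of a complex matrix evaluated on a real vector. -/
def qform {d : ℕ} (Θ : Matrix (Fin d) (Fin d) ℂ) (v : Fin d → ℝ) : ℂ :=
  ∑ i, ∑ j, Θ i j * (v i : ℂ) * (v j : ℂ)

/-- The complex phase `Φ^κ`. -/
def phase {d : ℕ} (κ : PS d → PS d) (S : PS d → ℝ) (Θx Θy : Matrix (Fin d) (Fin d) ℂ)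
    (x y q p : V d) : ℂ :=
  (S (q, p) : ℂ)
    + ∑ j, ((κ (q, p)).2 j : ℂ) * ((x j - (κ (q, p)).1 j : ℝ) : ℂ)
    - ∑ j, ((p j : ℝ) : ℂ) * ((y j - q j : ℝ) : ℂ)
    + Complex.I / 2 * qform Θx (fun j => x j - (κ (q, p)).1 j)
    + Complex.I / 2 * qform Θy (fun j => y j - q j)

/-- `(2πε)^{-3d/2}`. -/
def coef (d : ℕ) (ε : ℝ) : ℝ := (2 * Real.pi * ε) ^ (-(3 * (d : ℝ)) / 2)

/-- The integral kernel `K^ε(κ;u;Θ^x,Θ^y)`. -/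
def FIOkernel {d : ℕ} (ε : ℝ) (κ : PS d → PS d) (S : PS d → ℝ)
    (Θx Θy : Matrix (Fin d) (Fin d) ℂ) (u : PS d × PS d → ℂ) (x y : V d) : ℂ :=
  (coef d ε : ℂ) *
    ∫ qp : PS d, Complex.exp (Complex.I * phase κ S Θx Θy x y qp.1 qp.2 / (ε : ℂ)) * u ((x, y), qp)

/-- The integral operator with kernel `K^ε(κ;u;Θ^x,Θ^y)`. -/
def FIOkernelOp {d : ℕ} (ε : ℝ) (κ : PS d → PS d) (S : PS d → ℝ)
    (Θx Θy : Matrix (Fin d) (Fin d) ℂ) (u : PS d × PS d → ℂ) (φ : V d → ℂ) (x : V d) : ℂ :=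
  ∫ y : V d, FIOkernel ε κ S Θx Θy u x y * φ y

/-- Gaussian cut-off `σ(q/λ, p/λ)` with `σ(q,p) = e^{-|q|²-|p|²}`. -/
def gcut {d : ℕ} (lam : ℝ) (qp : PS d) : ℂ :=
  Complex.exp (-(Complex.ofReal (((∑ j, qp.1 j ^ 2) + ∑ j, qp.2 j ^ 2) / lam ^ 2)))

/-- The semiclassical FIO with complex phase associated to `κ`, defined (as in the paper,
Remark 4.2(i)) as the limit `λ → ∞` of the absolutely convergent regularized integrals. -/
def FIO {d : ℕ} (ε : ℝ) (κ : PS d → PS d) (S : PS d → ℝ)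
    (Θx Θy : Matrix (Fin d) (Fin d) ℂ) (u : PS d × PS d → ℂ) (φ : V d → ℂ) (x : V d) : ℂ :=
  limUnder atTop fun lam : ℝ =>
    (coef d ε : ℂ) * ∫ w : V d × PS d,
      Complex.exp (Complex.I * phase κ S Θx Θy x w.1 w.2.1 w.2.2 / (ε : ℂ)) *
        gcut lam w.2 * u ((x, w.1), w.2) * φ w.1

/-- The japanese bracket weight `⟨v⟩^{-m}`. -/
def jbr (m v : ℝ) : ℝ := (1 + v ^ 2) ^ (-m / 2)

def wt4 {d : ℕ} (m1 m2 m3 m4 : ℝ) (z : PS d × PS d) : ℝ :=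
  jbr m1 ‖z.1.1‖ * jbr m2 ‖z.1.2‖ * jbr m3 ‖z.2.1‖ * jbr m4 ‖z.2.2‖

/-- The symbol class `S[(m1,m2,m3,m4);(d,d,d,d)]` in the variables `((x,y),(q,p))`. -/
def InS4 {d : ℕ} (m1 m2 m3 m4 : ℝ) (u : PS d × PS d → ℂ) : Prop :=
  ContDiff ℝ (⊤ : ℕ∞) u ∧
    ∀ n : ℕ, ∃ C : ℝ, ∀ z, wt4 m1 m2 m3 m4 z * ‖iteratedFDeriv ℝ n u z‖ ≤ C

/-- Seminorms of the symbol class `S[(m1,m2,m3,m4);(d,d,d,d)]`. -/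
def sem4 {d : ℕ} (m1 m2 m3 m4 : ℝ) (u : PS d × PS d → ℂ) (N : ℕ) : ℝ :=
  ∑ n ∈ Finset.range (N + 1),
    ⨆ z : PS d × PS d, wt4 m1 m2 m3 m4 z * ‖iteratedFDeriv ℝ n u z‖

/-- `∑_{|α| ≤ N} ‖∂^α_{(x,y)} u‖_{L^∞}`. -/
def xySem {d : ℕ} (u : PS d × PS d → ℂ) (N : ℕ) : ℝ :=
  ∑ n ∈ Finset.range (N + 1),
    ⨆ z : PS d × PS d, ‖iteratedFDeriv ℝ n (fun xy => u (xy, z.2)) z.1‖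

abbrev L2 (d : ℕ) := MeasureTheory.Lp ℂ 2 (volume : Measure (V d))

/-- `T` is the extension of the map `A` from the Schwartz class to `L²`. -/
def ExtendsOp {d : ℕ} (T : L2 d →L[ℂ] L2 d) (A : (V d → ℂ) → V d → ℂ) : Prop :=
  ∀ φ : SchwartzMap (V d) ℂ, ∀ f : L2 d,
    (⇑f =ᵐ[(volume : Measure (V d))] ⇑φ) → (⇑(T f) =ᵐ[(volume : Measure (V d))] A ⇑φ)

/-- `(det ReΘ^x ⬝ det ReΘ^y)^e`. -/
def detPow {d : ℕ} (Θx Θy : Matrix (Fin d) (Fin d) ℂ) (e : ℝ) : ℝ :=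
  ((reM Θx).det * (reM Θy).det) ^ e

/-- The normalized coherent state `g^{ε,Θ}_{q,p}`. -/
def coh {d : ℕ} (ε : ℝ) (Θ : Matrix (Fin d) (Fin d) ℂ) (q p y : V d) : ℂ :=
  (((reM Θ).det ^ ((1 : ℝ) / 4) * (Real.pi * ε) ^ (-(d : ℝ) / 4) : ℝ) : ℂ) *
    Complex.exp (Complex.I / (ε : ℂ) * ∑ j, ((p j : ℝ) : ℂ) * ((y j - q j : ℝ) : ℂ)
      - 1 / (2 * (ε : ℂ)) * qform Θ (fun j => y j - q j))

/-- The FBI transform `W^ε(Θ)`. -/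
def FBI {d : ℕ} (ε : ℝ) (Θ : Matrix (Fin d) (Fin d) ℂ) (φ : V d → ℂ) (qp : PS d) : ℂ :=
  (((2 * Real.pi * ε) ^ (-(d : ℝ) / 2) : ℝ) : ℂ) *
    ∫ y : V d, conj (coh ε Θ qp.1 qp.2 y) * φ y

/-- The inverse FBI transform `W^ε_{inv}(Θ)`. -/
def FBIinv {d : ℕ} (ε : ℝ) (Θ : Matrix (Fin d) (Fin d) ℂ) (Φ : PS d → ℂ) (y : V d) : ℂ :=
  (((2 * Real.pi * ε) ^ (-(d : ℝ) / 2) : ℝ) : ℂ) *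
    ∫ qp : PS d, coh ε Θ qp.1 qp.2 y * Φ qp

/-- standard basis vectors of `ℝ^d × ℝ^d`. -/
def basisV (d : ℕ) (i : Fin d ⊕ Fin d) : PS d :=
  Sum.elim (fun a => (EuclideanSpace.single a (1 : ℝ), 0))
    (fun b => (0, EuclideanSpace.single b (1 : ℝ))) i

/-- components of a vector of `ℝ^d × ℝ^d`. -/
def compV {d : ℕ} (w : PS d) : Fin d ⊕ Fin d → ℝ :=
  Sum.elim (fun a => w.1 a) (fun b => w.2 b)

/-- The Jacobian matrix `F^κ(z)`. -/
def Jac {d : ℕ} (κ : PS d → PS d) (z : PS d) :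
    Matrix (Fin d ⊕ Fin d) (Fin d ⊕ Fin d) ℝ :=
  Matrix.of fun i j => compV (fderiv ℝ κ z (basisV d j)) i

/-- The matrix `𝒲(F;Θ^x,Θ^y)`. -/
def Wmat {d : ℕ} (F : Matrix (Fin d ⊕ Fin d) (Fin d ⊕ Fin d) ℝ)
    (Θx Θy : Matrix (Fin d) (Fin d) ℂ) : Matrix (Fin d ⊕ Fin d) (Fin d ⊕ Fin d) ℂ :=
  Matrix.fromBlocks
    ((F.toBlocks₂₁.map Complex.ofReal)ᵀ - Complex.I • ((F.toBlocks₁₁.map Complex.ofReal)ᵀ * Θx))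
    (-(Complex.I • Θy))
    ((F.toBlocks₂₂.map Complex.ofReal)ᵀ - Complex.I • ((F.toBlocks₁₂.map Complex.ofReal)ᵀ * Θx))
    (-1)

/-- The operator `L(κ;Θ^x,Θ^y;V)u = div_{(q,p)}[u ⋅ (𝒲(F^κ)^†)^{-1} V]`. -/
def Ldiv {d : ℕ} (κ : PS d → PS d) (Θx Θy : Matrix (Fin d) (Fin d) ℂ)
    (V1 V2 : Fin d → ℂ) (u : PS d × PS d → ℂ) : PS d × PS d → ℂ :=
  fun z => ∑ i : Fin d ⊕ Fin d,
    fderiv ℝ (fun w : PS d =>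
      u (z.1, w) * (((Wmat (Jac κ w) Θx Θy)ᵀ)⁻¹ *ᵥ Sum.elim V1 V2) i) z.2 (basisV d i)

/-- The operator `L'(κ;Θ^x,Θ^y;V)`. -/
def Lprime {d : ℕ} (κ : PS d → PS d) (Θx Θy : Matrix (Fin d) (Fin d) ℂ)
    (Vx Vy Vq Vp : Fin d → ℂ) (u : PS d × PS d → ℂ) : PS d × PS d → ℂ :=
  fun z =>
    Ldiv κ Θx Θy (fun j => Vq j - Complex.I * ∑ k, Θx j k * Vx k)
      (fun j => Vp j + Complex.I * ∑ k, Θy j k * Vy k) u z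
    + ∑ j, Vx j * fderiv ℝ (fun x' : V d => u ((x', z.1.2), z.2)) z.1.1
        (EuclideanSpace.single j (1 : ℝ))
    - ∑ j, Vy j * fderiv ℝ (fun y' : V d => u ((z.1.1, y'), z.2)) z.1.2
        (EuclideanSpace.single j (1 : ℝ))

/-- `B` is the formal adjoint of `A` on the Schwartz class. -/
def IsFormalAdjoint {d : ℕ} (A : (V d → ℂ) → V d → ℂ)
    (B : SchwartzMap (V d) ℂ → SchwartzMap (V d) ℂ) : Prop :=
  ∀ φ ψ : SchwartzMap (V d) ℂ,
    ∫ x : V d, conj (A (⇑φ) x) * ψ x = ∫ x : V d, conj (φ x) * (B ψ) x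

/-- `T` is the `L²`-extension of the integral operator with kernel `K^ε(κ;u;Θ^x,Θ^y)`. -/
def ExtendsKernelOp {d : ℕ} (T : L2 d →L[ℂ] L2 d) (ε : ℝ) (κ : PS d → PS d) (S : PS d → ℝ)
    (Θx Θy : Matrix (Fin d) (Fin d) ℂ) (u : PS d × PS d → ℂ) : Prop :=
  ∀ φ : SchwartzMap (V d) ℂ, ∀ f : L2 d,
    (⇑f =ᵐ[(volume : Measure (V d))] ⇑φ) →
      (⇑(T f) =ᵐ[(volume : Measure (V d))] FIOkernelOp ε κ S Θx Θy u ⇑φ)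

/-- `M[u;m^q,m^p] = sup ⟨q⟩^{-m^q} ⟨p⟩^{-m^p} |u|`. -/
def Mqp {d : ℕ} (mq mp : ℝ) (u : PS d × PS d → ℂ) : ℝ :=
  ⨆ z : PS d × PS d, jbr mq ‖z.2.1‖ * jbr mp ‖z.2.2‖ * ‖u z‖

/-- Square root of a positive semidefinite real matrix. -/
def mySqrt {d : ℕ} (A : Matrix (Fin d) (Fin d) ℝ) : Matrix (Fin d) (Fin d) ℝ :=
  @dite _ A.PosSemidef (Classical.propDecidable _) (fun h => (h.1.eigenvectorUnitary : Matrix (Fin d) (Fin d) ℝ) *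
    Matrix.diagonal (Real.sqrt ∘ h.1.eigenvalues) *
      (star h.1.eigenvectorUnitary : Matrix (Fin d) (Fin d) ℝ)) fun _ => 0

/-- The symplectic matrix `Λ(Θ)`. -/
def Lam {d : ℕ} (Θ : Matrix (Fin d) (Fin d) ℂ) :
    Matrix (Fin d ⊕ Fin d) (Fin d ⊕ Fin d) ℝ :=
  Matrix.fromBlocks (mySqrt (reM Θ)) 0 ((mySqrt (reM Θ))⁻¹ * imM Θ) (mySqrt (reM Θ))⁻¹

/-- The map `z ↦ Λ(Θ)(f(z))`. -/
def LamMap {d : ℕ} (Θ : Matrix (Fin d) (Fin d) ℂ) (f : PS d → PS d) (z : PS d) :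
    Fin d ⊕ Fin d → ℝ :=
  Lam Θ *ᵥ compV (f z)

/-- `δ_g[A,B] = inf {|g(a) - g(b)| : a ∈ A, b ∈ B}`. -/
def deltaD {d : ℕ} (g : PS d → Fin d ⊕ Fin d → ℝ) (A B : Set (PS d)) : ℝ :=
  sInf {r : ℝ | ∃ a ∈ A, ∃ b ∈ B, r = Real.sqrt (∑ i, (g a i - g b i) ^ 2)}

/-- `‖w‖_{W^{N,∞}}`. -/
def wSob {d : ℕ} (u : PS d → ℂ) (N : ℕ) : ℝ :=
  ∑ n ∈ Finset.range (N + 1), ⨆ z : PS d, ‖iteratedFDeriv ℝ n u z‖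

/-- `‖∂^a_x u‖_{L^∞_{(x,y)} L¹_{(q,p)}}`. -/
def xDerL1 {d : ℕ} (u : PS d × PS d → ℂ) (a : ℕ) : ℝ :=
  ⨆ xy : PS d, ∫ qp : PS d, ‖iteratedFDeriv ℝ a (fun x' : V d => u ((x', xy.2), qp)) xy.1‖

/-- `‖∂^a_y u‖_{L^∞_{(x,y)} L¹_{(q,p)}}`. -/
def yDerL1 {d : ℕ} (u : PS d × PS d → ℂ) (a : ℕ) : ℝ :=
  ⨆ xy : PS d, ∫ qp : PS d, ‖iteratedFDeriv ℝ a (fun y' : V d => u ((xy.1, y'), qp)) xy.2‖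

/-- The standard symplectic matrix `J`. -/
def Jstd (d : ℕ) : Matrix (Fin d ⊕ Fin d) (Fin d ⊕ Fin d) ℝ :=
  Matrix.fromBlocks 0 1 (-1) 0

def IsSympMat {d : ℕ} (F : Matrix (Fin d ⊕ Fin d) (Fin d ⊕ Fin d) ℝ) : Prop :=
  Fᵀ * Jstd d * F = Jstd d

/-- Frobenius norm of a `2d × 2d` real matrix. -/
def frob {d : ℕ} (M : Matrix (Fin d ⊕ Fin d) (Fin d ⊕ Fin d) ℝ) : ℝ :=
  Real.sqrt (∑ i, ∑ j, M i j ^ 2)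

/-- The linear map `J(q,p) = (p,-q)`. -/
def Jlin {d : ℕ} (v : PS d) : PS d := (v.2, -v.1)

/-- The standard dot product on `ℝ^d × ℝ^d`. -/
def dotPS {d : ℕ} (v w : PS d) : ℝ := (inner ℝ v.1 w.1 : ℝ) + (inner ℝ v.2 w.2 : ℝ)



section Aux14

variable {d : ℕ}

/-! ### Coordinates and basis -/

/-- The standard basis of `PS d` as a `Basis`. -/
def bb (d : ℕ) : Module.Basis (Fin d ⊕ Fin d) ℝ (PS d) :=
  ((EuclideanSpace.basisFun (Fin d) ℝ).toBasis).prod ((EuclideanSpace.basisFun (Fin d) ℝ).toBasis)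

lemma bb_repr (x : PS d) (i : Fin d ⊕ Fin d) : (bb d).repr x i = compV x i := by
  cases i <;>
    simp [bb, compV, OrthonormalBasis.coe_toBasis_repr_apply, EuclideanSpace.basisFun_repr]

lemma bb_apply (i : Fin d ⊕ Fin d) : bb d i = basisV d i := by
  cases i with
  | inl a =>
    refine Prod.ext ?_ ?_
    · rw [bb, Module.Basis.prod_apply_inl_fst]
      simp [basisV, OrthonormalBasis.coe_toBasis, EuclideanSpace.basisFun_apply]
    · rw [bb, Module.Basis.prod_apply_inl_snd]; simp [basisV]
  | inr b =>
    refine Prod.ext ?_ ?_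
    · rw [bb, Module.Basis.prod_apply_inr_fst]; simp [basisV]
    · rw [bb, Module.Basis.prod_apply_inr_snd]
      simp [basisV, OrthonormalBasis.coe_toBasis, EuclideanSpace.basisFun_apply]

/-- The matrix of a continuous linear map on `PS d` in the standard basis. -/
def matOf (T : PS d →L[ℝ] PS d) : Matrix (Fin d ⊕ Fin d) (Fin d ⊕ Fin d) ℝ :=
  LinearMap.toMatrix (bb d) (bb d) (T : PS d →ₗ[ℝ] PS d)

lemma matOf_apply (T : PS d →L[ℝ] PS d) (i j : Fin d ⊕ Fin d) :
    matOf T i j = compV (T (basisV d j)) i := by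
  rw [matOf, LinearMap.toMatrix_apply, bb_repr, bb_apply]; rfl

lemma Jac_eq (κ : PS d → PS d) (z : PS d) : Jac κ z = matOf (fderiv ℝ κ z) := by
  ext i j; rw [matOf_apply]; rfl

lemma matOf_id : matOf (ContinuousLinearMap.id ℝ (PS d)) = 1 := by
  rw [matOf]
  simp [LinearMap.toMatrix_id]

lemma matOf_comp (T S : PS d →L[ℝ] PS d) : matOf (T.comp S) = matOf T * matOf S := by
  rw [matOf, matOf, matOf, ContinuousLinearMap.toLinearMap_comp, LinearMap.toMatrix_comp _ (bb d) _]

lemma matOf_inj : Function.Injective (matOf (d := d)) := by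
  intro T S h
  apply ContinuousLinearMap.coe_injective
  exact (LinearMap.toMatrix (bb d) (bb d)).injective h

lemma compV_clm (T : PS d →L[ℝ] PS d) (v : PS d) :
    compV (T v) = matOf T *ᵥ compV v := by
  have h1 : ⇑((bb d).repr v) = compV v := funext (bb_repr v)
  have h2 := LinearMap.toMatrix_mulVec_repr (bb d) (bb d) (T : PS d →ₗ[ℝ] PS d) v
  funext i
  calc compV (T v) i = (bb d).repr (T v) i := (bb_repr _ _).symm
    _ = (LinearMap.toMatrix (bb d) (bb d) (T : PS d →ₗ[ℝ] PS d) *ᵥ ⇑((bb d).repr v)) i := by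
        rw [h2]; rfl
    _ = (matOf T *ᵥ compV v) i := by rw [h1, matOf]

/-! ### The symplectic form in coordinates -/

lemma dotPS_eq (v w : PS d) : dotPS v w = ∑ i, compV v i * compV w i := by
  rw [dotPS, Fintype.sum_sum_type]
  simp [compV, PiLp.inner_apply, RCLike.inner_apply, conj_trivial, mul_comm]

lemma compV_Jlin (v : PS d) : compV (Jlin v) = Jstd d *ᵥ compV v := by
  funext i
  cases i with
  | inl a =>
    show v.2 a = _
    simp [Jstd, Matrix.mulVec, dotProduct, Fintype.sum_sum_type, Matrix.fromBlocks,
      Matrix.one_apply, compV]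
  | inr b =>
    show -v.1 b = _
    simp [Jstd, Matrix.mulVec, dotProduct, Fintype.sum_sum_type, Matrix.fromBlocks,
      Matrix.one_apply, compV]

lemma symForm_eq (v w : PS d) : symForm d v w = dotPS v (Jlin w) := by
  simp [symForm, dotPS, Jlin, real_inner_comm, inner_neg_right, sub_eq_add_neg]

lemma symForm_dot (v w : PS d) : symForm d v w = compV v ⬝ᵥ (Jstd d *ᵥ compV w) := by
  rw [symForm_eq, dotPS_eq, compV_Jlin]; rfl

lemma compV_surj : Function.Surjective (compV (d := d)) := by
  intro x
  exact ⟨((WithLp.toLp 2 (fun a => x (Sum.inl a)) : EuclideanSpace ℝ (Fin d)),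
    (WithLp.toLp 2 (fun b => x (Sum.inr b)) : EuclideanSpace ℝ (Fin d))), by funext i; cases i <;> rfl⟩

lemma mat_ext_of_dot {A B : Matrix (Fin d ⊕ Fin d) (Fin d ⊕ Fin d) ℝ}
    (h : ∀ x y, x ⬝ᵥ (A *ᵥ y) = x ⬝ᵥ (B *ᵥ y)) : A = B := by
  ext i j
  have := h (Pi.single i 1) (Pi.single j 1)
  simpa [single_dotProduct, Matrix.mulVec_single] using this

lemma symp_matrix {T : PS d →L[ℝ] PS d}
    (h : ∀ v w, symForm d (T v) (T w) = symForm d v w) :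
    (matOf T)ᵀ * Jstd d * matOf T = Jstd d := by
  apply mat_ext_of_dot
  intro x y
  obtain ⟨v, rfl⟩ := compV_surj (d := d) x
  obtain ⟨w, rfl⟩ := compV_surj (d := d) y
  have h' := h v w
  rw [symForm_dot, symForm_dot, compV_clm, compV_clm] at h'
  calc compV v ⬝ᵥ (((matOf T)ᵀ * Jstd d * matOf T) *ᵥ compV w)
      = compV v ⬝ᵥ ((matOf T)ᵀ *ᵥ (Jstd d *ᵥ (matOf T *ᵥ compV w))) := by
        rw [Matrix.mulVec_mulVec, Matrix.mulVec_mulVec, Matrix.mul_assoc]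
    _ = (compV v ᵥ* (matOf T)ᵀ) ⬝ᵥ (Jstd d *ᵥ (matOf T *ᵥ compV w)) := by
        rw [Matrix.dotProduct_mulVec]
    _ = (matOf T *ᵥ compV v) ⬝ᵥ (Jstd d *ᵥ (matOf T *ᵥ compV w)) := by
        rw [Matrix.vecMul_transpose]
    _ = compV v ⬝ᵥ (Jstd d *ᵥ compV w) := h'

lemma Jstd_mul_Jstd : Jstd d * Jstd d = -1 := by
  ext i j
  cases i <;> cases j <;>
    simp [Jstd, Matrix.mul_apply, Fintype.sum_sum_type, Matrix.fromBlocks, Matrix.one_apply]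

lemma symp_inv {M : Matrix (Fin d ⊕ Fin d) (Fin d ⊕ Fin d) ℝ}
    (h : Mᵀ * Jstd d * M = Jstd d) :
    (-(Jstd d) * Mᵀ * Jstd d) * M = 1 ∧ M * (-(Jstd d) * Mᵀ * Jstd d) = 1 := by
  have h1 : (-(Jstd d) * Mᵀ * Jstd d) * M = 1 := by
    have : -(Jstd d) * Mᵀ * Jstd d * M = -(Jstd d) * (Mᵀ * Jstd d * M) := by
      rw [Matrix.mul_assoc, Matrix.mul_assoc, Matrix.mul_assoc]
    rw [this, h, Matrix.neg_mul, Jstd_mul_Jstd, neg_neg]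
  exact ⟨h1, mul_eq_one_comm.mp h1⟩

/-! ### The inverse-forming operator -/

/-- `T ↦ -J Tᵀ J` as a linear map on continuous linear maps. -/
def BopLin (d : ℕ) : (PS d →L[ℝ] PS d) →ₗ[ℝ] (PS d →L[ℝ] PS d) where
  toFun T := LinearMap.toContinuousLinearMap
    (Matrix.toLin (bb d) (bb d) (-(Jstd d) * (matOf T)ᵀ * Jstd d))
  map_add' T S := by
    simp [matOf, Matrix.transpose_add, Matrix.add_mul, Matrix.mul_add, map_add]
    abel
  map_smul' c T := by
    simp [matOf, Matrix.transpose_smul, Matrix.smul_mul, Matrix.mul_smul, _root_.map_smul]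

/-- `T ↦ -J Tᵀ J` as a continuous linear map. -/
def Bop (d : ℕ) : (PS d →L[ℝ] PS d) →L[ℝ] (PS d →L[ℝ] PS d) :=
  LinearMap.toContinuousLinearMap (BopLin d)

lemma matOf_Bop (T : PS d →L[ℝ] PS d) :
    matOf (Bop d T) = -(Jstd d) * (matOf T)ᵀ * Jstd d := by
  have : Bop d T = BopLin d T := rfl
  rw [this]
  show matOf (LinearMap.toContinuousLinearMap
    (Matrix.toLin (bb d) (bb d) (-(Jstd d) * (matOf T)ᵀ * Jstd d))) = _
  rw [matOf, LinearMap.coe_toContinuousLinearMap, LinearMap.toMatrix_toLin]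

lemma Bop_inv {T : PS d →L[ℝ] PS d}
    (h : ∀ v w, symForm d (T v) (T w) = symForm d v w) :
    (Bop d T).comp T = ContinuousLinearMap.id ℝ (PS d) ∧
      T.comp (Bop d T) = ContinuousLinearMap.id ℝ (PS d) := by
  obtain ⟨h1, h2⟩ := symp_inv (symp_matrix h)
  constructor
  · apply matOf_inj; rw [matOf_comp, matOf_Bop, matOf_id]; exact h1
  · apply matOf_inj; rw [matOf_comp, matOf_Bop, matOf_id]; exact h2

/-! ### Chain rule facts for the inverse -/

variable {κ κ' : PS d → PS d}

lemma inv_comp_id (hκ : Function.Bijective κ) : κ ∘ Function.invFun κ = id :=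
  funext fun z => Function.invFun_eq (hκ.2 z)

lemma comp_inv_id (hκ : Function.Bijective κ) : Function.invFun κ ∘ κ = id :=
  funext fun z => Function.leftInverse_invFun hκ.1 z

lemma fderiv_FG (hκ : IsCanonical d κ) (z : PS d) :
    (fderiv ℝ κ (Function.invFun κ z)).comp (fderiv ℝ (Function.invFun κ) z)
      = ContinuousLinearMap.id ℝ (PS d) := by
  have h := fderiv_comp (𝕜 := ℝ) z
    (hκ.smooth.differentiable (by simp) _) (hκ.smooth_inv.differentiable (by simp) z)
  rw [← h, inv_comp_id hκ.bij, fderiv_id]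

lemma fderiv_GF (hκ : IsCanonical d κ) (z : PS d) :
    (fderiv ℝ (Function.invFun κ) z).comp (fderiv ℝ κ (Function.invFun κ z))
      = ContinuousLinearMap.id ℝ (PS d) := by
  have h := fderiv_comp (𝕜 := ℝ) (Function.invFun κ z)
    (hκ.smooth_inv.differentiable (by simp) (κ (Function.invFun κ z)))
    (hκ.smooth.differentiable (by simp) (Function.invFun κ z))
  rw [comp_inv_id hκ.bij, fderiv_id] at h
  rw [Function.invFun_eq (hκ.bij.2 z)] at h
  exact h.symm

lemma fderiv_inv_eq (hκ : IsCanonical d κ) (z : PS d) :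
    fderiv ℝ (Function.invFun κ) z = Bop d (fderiv ℝ κ (Function.invFun κ z)) := by
  set F := fderiv ℝ κ (Function.invFun κ z) with hF
  set G := fderiv ℝ (Function.invFun κ) z with hG
  have h1 : F.comp G = ContinuousLinearMap.id ℝ (PS d) := fderiv_FG hκ z
  have hb := (Bop_inv (fun v w => hκ.symp (Function.invFun κ z) v w)).1
  calc G = (ContinuousLinearMap.id ℝ (PS d)).comp G := by rw [ContinuousLinearMap.id_comp]
    _ = ((Bop d F).comp F).comp G := by rw [hb]
    _ = (Bop d F).comp (F.comp G) := by rw [ContinuousLinearMap.comp_assoc]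
    _ = Bop d F := by rw [h1, ContinuousLinearMap.comp_id]

/-! ### `dotPS`/`Jlin` algebra -/

lemma Jlin_Jlin (w : PS d) : Jlin (Jlin w) = -w := by
  simp [Jlin, Prod.ext_iff]

lemma dotPS_neg_right (v w : PS d) : dotPS v (-w) = -dotPS v w := by
  simp [dotPS, inner_neg_right] <;> ring

lemma dotPS_J_left (v w : PS d) : dotPS (Jlin v) w = -dotPS v (Jlin w) := by
  simp [dotPS, Jlin, inner_neg_left, inner_neg_right, real_inner_comm] <;> ring

/-! ### Frobenius norm invariance -/

lemma frob_conj (A : Matrix (Fin d ⊕ Fin d) (Fin d ⊕ Fin d) ℝ) :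
    frob (-(Jstd d) * Aᵀ * Jstd d) = frob A := by
  have hent : ∀ i j, (-(Jstd d) * Aᵀ * Jstd d) i j ^ 2 = A (Sum.swap j) (Sum.swap i) ^ 2 := by
    rintro (a | a) (b | b) <;>
      simp [Jstd, Matrix.mul_apply, Fintype.sum_sum_type, Matrix.fromBlocks,
        Matrix.one_apply, Finset.mul_sum, Sum.swap, Finset.sum_ite_eq, Finset.sum_ite_eq'] <;>
      ring
  rw [frob, frob]
  congr 1
  calc ∑ i, ∑ j, (-(Jstd d) * Aᵀ * Jstd d) i j ^ 2
      = ∑ i, ∑ j, A (Sum.swap j) (Sum.swap i) ^ 2 := by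
        refine Finset.sum_congr rfl fun i _ => Finset.sum_congr rfl fun j _ => hent i j
    _ = ∑ j, ∑ i, A (Sum.swap j) (Sum.swap i) ^ 2 := Finset.sum_comm
    _ = ∑ j, ∑ i, A (Sum.swap j) i ^ 2 := by
        refine Finset.sum_congr rfl fun j _ => ?_
        exact Fintype.sum_equiv (Equiv.sumComm (Fin d) (Fin d)) _ _ fun i => rfl
    _ = ∑ j, ∑ i, A j i ^ 2 :=
        Fintype.sum_equiv (Equiv.sumComm (Fin d) (Fin d)) _ _ fun j => rfl

/-! ### Uniform bounds -/

lemma boundAll (hκ : IsClassB d κ) (n : ℕ) :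
    ∃ M : ℝ, 0 ≤ M ∧ ∀ l, 1 ≤ l → l ≤ n → ∀ z, ‖iteratedFDeriv ℝ l κ z‖ ≤ M := by
  classical
  set f : ℕ → ℝ := fun l =>
    if h : 1 ≤ l then Classical.choose (hκ.derivBound l h) else 0 with hfdef
  have hf : ∀ l (h : 1 ≤ l), ∀ z, ‖iteratedFDeriv ℝ l κ z‖ ≤ f l := by
    intro l h z
    simp only [hfdef, dif_pos h]
    exact Classical.choose_spec (hκ.derivBound l h) z
  refine ⟨∑ l ∈ Finset.range (n + 1), |f l|, by positivity, fun l hl1 hln z => ?_⟩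
  calc ‖iteratedFDeriv ℝ l κ z‖ ≤ f l := hf l hl1 z
    _ ≤ |f l| := le_abs_self _
    _ ≤ ∑ l ∈ Finset.range (n + 1), |f l| :=
        Finset.single_le_sum (fun i _ => abs_nonneg (f i))
          (Finset.mem_range.mpr (Nat.lt_succ_of_le hln))

/-! ### Derivative bound for compositions -/

lemma comp_deriv_bound (m : ℕ)
    (hκ : ContDiff ℝ (⊤ : ℕ∞) κ) (hκ' : ContDiff ℝ (⊤ : ℕ∞) κ') (M : ℝ) (hM : 0 ≤ M)
    (h1 : ∀ l, 1 ≤ l → l ≤ m + 1 → ∀ z, ‖iteratedFDeriv ℝ l κ z‖ ≤ M)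
    (h2 : ∀ l, 1 ≤ l → l ≤ m + 1 → ∀ z, ‖iteratedFDeriv ℝ l κ' z‖ ≤ M) (z : PS d) :
    ‖iteratedFDeriv ℝ (m + 1) (κ' ∘ κ) z‖ ≤
      ∑ i ∈ Finset.range (m + 1),
        (m.choose i : ℝ) * ((i.factorial : ℝ) * M * (M + 1) ^ i) * M := by
  have hd : (fderiv ℝ (κ' ∘ κ)) = fun y =>
      ContinuousLinearMap.compL ℝ (PS d) (PS d) (PS d) (fderiv ℝ κ' (κ y)) (fderiv ℝ κ y) := by
    funext y
    rw [fderiv_comp y (hκ'.differentiable (by simp) _) (hκ.differentiable (by simp) y)]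
    rfl
  have hf : ContDiff ℝ (⊤ : ℕ∞) (fun y => fderiv ℝ κ' (κ y)) :=
    (hκ'.fderiv_right (by simp)).comp hκ
  have hg : ContDiff ℝ (⊤ : ℕ∞) (fderiv ℝ κ) := hκ.fderiv_right (by simp)
  rw [← norm_iteratedFDeriv_fderiv, hd]
  refine le_trans
    ((ContinuousLinearMap.compL ℝ (PS d) (PS d) (PS d)).norm_iteratedFDeriv_le_of_bilinear_of_le_one
      hf hg z (by exact_mod_cast le_top) (ContinuousLinearMap.norm_compL_le ℝ (PS d) (PS d) (PS d))) ?_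
  refine Finset.sum_le_sum fun i hi => ?_
  have him : i ≤ m := Nat.lt_succ_iff.mp (Finset.mem_range.mp hi)
  have hbf : ‖iteratedFDeriv ℝ i (fun y => fderiv ℝ κ' (κ y)) z‖ ≤
      (i.factorial : ℝ) * M * (M + 1) ^ i := by
    have := norm_iteratedFDeriv_comp_le (g := fderiv ℝ κ') (f := κ) (n := i)
      (hκ'.fderiv_right (by simp)) hκ (by exact_mod_cast le_top) z (C := M) (D := M + 1)
      (fun j hj => by
        rw [norm_iteratedFDeriv_fderiv]
        exact h2 (j + 1) (Nat.le_add_left 1 j) (by omega) (κ z))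
      (fun j hj1 hj2 => by
        calc ‖iteratedFDeriv ℝ j κ z‖ ≤ M := h1 j hj1 (by omega) z
          _ ≤ M + 1 := by linarith
          _ ≤ (M + 1) ^ j := le_self_pow₀ (by linarith) (by omega))
    exact this
  have hbg : ‖iteratedFDeriv ℝ (m - i) (fderiv ℝ κ) z‖ ≤ M := by
    rw [norm_iteratedFDeriv_fderiv]
    exact h1 (m - i + 1) (Nat.le_add_left 1 _) (by omega) z
  have h0f : (0:ℝ) ≤ (i.factorial : ℝ) * M * (M + 1) ^ i := by positivity
  calc (m.choose i : ℝ) * ‖iteratedFDeriv ℝ i (fun y => fderiv ℝ κ' (κ y)) z‖ *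
        ‖iteratedFDeriv ℝ (m - i) (fderiv ℝ κ) z‖
      ≤ (m.choose i : ℝ) * ((i.factorial : ℝ) * M * (M + 1) ^ i) * M := by
        have := mul_le_mul (mul_le_mul_of_nonneg_left hbf (by positivity : (0:ℝ) ≤ (m.choose i : ℝ)))
          hbg (norm_nonneg _) (by positivity)
        exact this

/-- Polynomial bound for the `n`-th derivative of a composition. -/
lemma compPoly (d : ℕ) (n : ℕ) (hn : 1 ≤ n) :
    ∃ P : Polynomial ℝ, ∀ κ κ' : PS d → PS d, ContDiff ℝ (⊤ : ℕ∞) κ → ContDiff ℝ (⊤ : ℕ∞) κ' →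
      ∀ M : ℝ, 0 ≤ M →
      (∀ l, 1 ≤ l → l ≤ n → ∀ z, ‖iteratedFDeriv ℝ l κ z‖ ≤ M) →
      (∀ l, 1 ≤ l → l ≤ n → ∀ z, ‖iteratedFDeriv ℝ l κ' z‖ ≤ M) →
      ∀ z : PS d, ‖iteratedFDeriv ℝ n (κ' ∘ κ) z‖ ≤ P.eval M := by
  obtain ⟨m, rfl⟩ : ∃ m, n = m + 1 := ⟨n - 1, by omega⟩
  refine ⟨∑ i ∈ Finset.range (m + 1),
    Polynomial.C ((m.choose i : ℝ) * (i.factorial : ℝ)) * Polynomial.X *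
      (Polynomial.X + 1) ^ i * Polynomial.X, ?_⟩
  intro κ κ' hκ hκ' M hM hb1 hb2 z
  refine le_trans (comp_deriv_bound m hκ hκ' M hM hb1 hb2 z) (le_of_eq ?_)
  rw [Polynomial.eval_finset_sum]
  refine Finset.sum_congr rfl fun i _ => ?_
  simp only [Polynomial.eval_mul, Polynomial.eval_pow, Polynomial.eval_add,
    Polynomial.eval_C, Polynomial.eval_X, Polynomial.eval_one]
  ring

/-! ### Polynomial bound for derivatives of the inverse -/

lemma invPoly (d : ℕ) : ∀ n : ℕ, 1 ≤ n → ∃ P : Polynomial ℝ,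
    ∀ κ : PS d → PS d, IsClassB d κ → ∀ M : ℝ,
      (∀ l : ℕ, 1 ≤ l → l ≤ n → ∀ z : PS d, ‖iteratedFDeriv ℝ l κ z‖ ≤ M) →
      ∀ z : PS d, ‖iteratedFDeriv ℝ n (Function.invFun κ) z‖ ≤ P.eval M := by
  intro n
  induction n using Nat.strong_induction_on with
  | _ n ih =>
    intro hn
    obtain ⟨m, rfl⟩ : ∃ m, n = m + 1 := ⟨n - 1, by omega⟩
    classical
    set Pf : ℕ → Polynomial ℝ := fun i =>
      if h : 1 ≤ i ∧ i < m + 1 then Classical.choose (ih i h.2 h.1) else 0 with hPfdef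
    set Q : Polynomial ℝ := ∑ i ∈ Finset.Icc 1 m, Pf i with hQdef
    refine ⟨Polynomial.C (‖Bop d‖ * (m.factorial : ℝ)) * Polynomial.X *
      (Q + 1) ^ m, ?_⟩
    intro κ hκ M hM z
    have hM0 : 0 ≤ M := le_trans (norm_nonneg _) (hM 1 le_rfl (by omega) 0)
    have hP : ∀ i, 1 ≤ i → i ≤ m → ∀ y : PS d,
        ‖iteratedFDeriv ℝ i (Function.invFun κ) y‖ ≤ (Pf i).eval M := by
      intro i h1 h2 y
      have hlt : i < m + 1 := by omega
      have := Classical.choose_spec (ih i hlt h1) κ hκ M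
        (fun l hl1 hl2 => hM l hl1 (by omega)) y
      simpa only [hPfdef, dif_pos (And.intro h1 hlt)] using this
    have hPnn : ∀ i, 1 ≤ i → i ≤ m → 0 ≤ (Pf i).eval M := fun i h1 h2 =>
      le_trans (norm_nonneg _) (hP i h1 h2 0)
    have hQeval : Q.eval M = ∑ i ∈ Finset.Icc 1 m, (Pf i).eval M := by
      rw [hQdef, Polynomial.eval_finset_sum]
    have hQnn : 0 ≤ Q.eval M := by
      rw [hQeval]
      exact Finset.sum_nonneg fun i hi => by
        obtain ⟨hi1, hi2⟩ := Finset.mem_Icc.mp hi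
        exact hPnn i hi1 hi2
    have hQb : ∀ i, 1 ≤ i → i ≤ m → (Pf i).eval M ≤ Q.eval M := by
      intro i h1 h2
      rw [hQeval]
      exact Finset.single_le_sum
        (fun j hj => by
          obtain ⟨hj1, hj2⟩ := Finset.mem_Icc.mp hj
          exact hPnn j hj1 hj2)
        (Finset.mem_Icc.mpr ⟨h1, h2⟩)
    have heq : (fderiv ℝ (Function.invFun κ)) =
        ⇑(Bop d) ∘ ((fderiv ℝ κ) ∘ (Function.invFun κ)) :=
      funext fun y => fderiv_inv_eq hκ.toIsCanonical y
    have hcf : ContDiff ℝ (⊤ : ℕ∞) ((fderiv ℝ κ) ∘ (Function.invFun κ)) :=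
      (hκ.smooth.fderiv_right (by simp)).comp hκ.smooth_inv
    have step1 : ‖iteratedFDeriv ℝ m (fderiv ℝ (Function.invFun κ)) z‖ ≤
        ‖Bop d‖ * ‖iteratedFDeriv ℝ m ((fderiv ℝ κ) ∘ (Function.invFun κ)) z‖ := by
      rw [heq, (Bop d).iteratedFDeriv_comp_left hcf.contDiffAt (by exact_mod_cast le_top)]
      exact (Bop d).norm_compContinuousMultilinearMap_le _
    have step2 : ‖iteratedFDeriv ℝ m ((fderiv ℝ κ) ∘ (Function.invFun κ)) z‖ ≤
        (m.factorial : ℝ) * M * (Q.eval M + 1) ^ m := by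
      refine norm_iteratedFDeriv_comp_le (hκ.smooth.fderiv_right (by simp)) hκ.smooth_inv
        (by exact_mod_cast le_top) z (C := M) (D := Q.eval M + 1)
        (fun j hj => by
          rw [norm_iteratedFDeriv_fderiv]
          exact hM (j + 1) (Nat.le_add_left 1 j) (by omega) _)
        (fun j hj1 hj2 => by
          calc ‖iteratedFDeriv ℝ j (Function.invFun κ) z‖ ≤ (Pf j).eval M :=
              hP j hj1 hj2 z
            _ ≤ Q.eval M := hQb j hj1 hj2
            _ ≤ Q.eval M + 1 := by linarith
            _ ≤ (Q.eval M + 1) ^ j := le_self_pow₀ (by linarith) (by omega))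
    rw [← norm_iteratedFDeriv_fderiv]
    refine le_trans step1 ?_
    refine le_trans (mul_le_mul_of_nonneg_left step2 (norm_nonneg (Bop d))) ?_
    apply le_of_eq
    simp only [Polynomial.eval_mul, Polynomial.eval_pow, Polynomial.eval_add,
      Polynomial.eval_C, Polynomial.eval_X, Polynomial.eval_one]
    ring

end Aux14

/-- canonical transformations of class `𝓑` form a group under composition;
`F^{κ^{-1}} = (F^κ ∘ κ^{-1})^{-1} = -J (F^κ ∘ κ^{-1})† J`; the sup-norm of `F^{κ^{-1}}`
equals that of `F^κ`; and the derivative bounds of `F^{κ^{-1}}` (resp. `F^{κ'∘κ}`) are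
bounded by polynomials in those of `F^κ` (resp. of `F^κ` and `F^{κ'}`). -/
theorem statement14 (d : ℕ) :
    (∀ κ κ' : PS d → PS d, IsClassB d κ → IsClassB d κ' → IsClassB d (κ' ∘ κ)) ∧
    (∀ κ : PS d → PS d, IsClassB d κ → IsClassB d (Function.invFun κ)) ∧
    (∀ κ : PS d → PS d, IsClassB d κ → ∀ z : PS d,
      ((fderiv ℝ κ (Function.invFun κ z)).comp (fderiv ℝ (Function.invFun κ) z)
          = ContinuousLinearMap.id ℝ (PS d)) ∧
      ((fderiv ℝ (Function.invFun κ) z).comp (fderiv ℝ κ (Function.invFun κ z))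
          = ContinuousLinearMap.id ℝ (PS d)) ∧
      ∀ v w : PS d,
        dotPS (fderiv ℝ (Function.invFun κ) z v) w
          = dotPS (Jlin v) (fderiv ℝ κ (Function.invFun κ z) (Jlin w))) ∧
    (∀ κ : PS d → PS d, IsClassB d κ →
      (⨆ z : PS d, frob (Jac (Function.invFun κ) z)) = ⨆ z : PS d, frob (Jac κ z)) ∧
    (∀ n : ℕ, 1 ≤ n → ∃ P : Polynomial ℝ,
      ∀ κ : PS d → PS d, IsClassB d κ → ∀ M : ℝ,
        (∀ l : ℕ, 1 ≤ l → l ≤ n → ∀ z : PS d, ‖iteratedFDeriv ℝ l κ z‖ ≤ M) →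
        ∀ z : PS d, ‖iteratedFDeriv ℝ n (Function.invFun κ) z‖ ≤ P.eval M) ∧
    (∀ n : ℕ, 1 ≤ n → ∃ P : Polynomial ℝ,
      ∀ κ κ' : PS d → PS d, IsClassB d κ → IsClassB d κ' → ∀ M : ℝ,
        (∀ l : ℕ, 1 ≤ l → l ≤ n →
          ∀ z : PS d, ‖iteratedFDeriv ℝ l κ z‖ ≤ M ∧ ‖iteratedFDeriv ℝ l κ' z‖ ≤ M) →
        ∀ z : PS d, ‖iteratedFDeriv ℝ n (κ' ∘ κ) z‖ ≤ P.eval M) := by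
  have part6 : ∀ n : ℕ, 1 ≤ n → ∃ P : Polynomial ℝ,
      ∀ κ κ' : PS d → PS d, IsClassB d κ → IsClassB d κ' → ∀ M : ℝ,
        (∀ l : ℕ, 1 ≤ l → l ≤ n →
          ∀ z : PS d, ‖iteratedFDeriv ℝ l κ z‖ ≤ M ∧ ‖iteratedFDeriv ℝ l κ' z‖ ≤ M) →
        ∀ z : PS d, ‖iteratedFDeriv ℝ n (κ' ∘ κ) z‖ ≤ P.eval M := by
    intro n hn
    obtain ⟨P, hP⟩ := compPoly d n hn
    refine ⟨P, fun κ κ' hκ hκ' M hb z => ?_⟩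
    have hM0 : 0 ≤ M := le_trans (norm_nonneg _) (hb 1 le_rfl hn 0).1
    exact hP κ κ' hκ.smooth hκ'.smooth M hM0
      (fun l h1 h2 z => (hb l h1 h2 z).1) (fun l h1 h2 z => (hb l h1 h2 z).2) z
  have part1 : ∀ κ κ' : PS d → PS d, IsClassB d κ → IsClassB d κ' →
      IsClassB d (κ' ∘ κ) := by
    intro κ κ' hκ hκ'
    have hbij : Function.Bijective (κ' ∘ κ) := hκ'.bij.comp hκ.bij
    have hinv : Function.invFun (κ' ∘ κ) = Function.invFun κ ∘ Function.invFun κ' := by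
      funext y
      apply hbij.1
      rw [Function.invFun_eq (hbij.2 y)]
      symm
      show (κ' ∘ κ) (Function.invFun κ (Function.invFun κ' y)) = y
      simp only [Function.comp_apply]
      rw [Function.invFun_eq (hκ.bij.2 _), Function.invFun_eq (hκ'.bij.2 y)]
    refine ⟨⟨hbij, hκ'.smooth.comp hκ.smooth, ?_, ?_⟩, ?_⟩
    · rw [hinv]; exact hκ.smooth_inv.comp hκ'.smooth_inv
    · intro z v w
      have hd := fderiv_comp (𝕜 := ℝ) z
        (hκ'.smooth.differentiable (by simp) (κ z)) (hκ.smooth.differentiable (by simp) z)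
      rw [hd]
      simp only [ContinuousLinearMap.coe_comp', Function.comp_apply]
      rw [hκ'.symp, hκ.symp]
    · intro n hn
      obtain ⟨P, hP⟩ := part6 n hn
      obtain ⟨M1, hM1nn, hM1⟩ := boundAll hκ n
      obtain ⟨M2, hM2nn, hM2⟩ := boundAll hκ' n
      refine ⟨P.eval (M1 + M2), fun z => hP κ κ' hκ hκ' (M1 + M2) ?_ z⟩
      intro l h1 h2 z
      constructor
      · exact le_trans (hM1 l h1 h2 z) (by linarith)
      · exact le_trans (hM2 l h1 h2 z) (by linarith)
  have part5 : ∀ n : ℕ, 1 ≤ n → ∃ P : Polynomial ℝ,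
      ∀ κ : PS d → PS d, IsClassB d κ → ∀ M : ℝ,
        (∀ l : ℕ, 1 ≤ l → l ≤ n → ∀ z : PS d, ‖iteratedFDeriv ℝ l κ z‖ ≤ M) →
        ∀ z : PS d, ‖iteratedFDeriv ℝ n (Function.invFun κ) z‖ ≤ P.eval M :=
    fun n hn => invPoly d n hn
  have part2 : ∀ κ : PS d → PS d, IsClassB d κ → IsClassB d (Function.invFun κ) := by
    intro κ hκ
    have hbinv : Function.Bijective (Function.invFun κ) :=
      Function.bijective_iff_has_inverse.mpr
        ⟨κ, fun z => Function.invFun_eq (hκ.bij.2 z),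
          fun z => Function.leftInverse_invFun hκ.bij.1 z⟩
    have hinvinv : Function.invFun (Function.invFun κ) = κ := by
      funext y
      apply hbinv.1
      rw [Function.invFun_eq (hbinv.2 y), Function.leftInverse_invFun hκ.bij.1 y]
    refine ⟨⟨hbinv, hκ.smooth_inv, ?_, ?_⟩, ?_⟩
    · rw [hinvinv]; exact hκ.smooth
    · intro z v w
      have hFG := fderiv_FG hκ.toIsCanonical z
      have h := hκ.symp (Function.invFun κ z)
        (fderiv ℝ (Function.invFun κ) z v) (fderiv ℝ (Function.invFun κ) z w)
      have e1 : fderiv ℝ κ (Function.invFun κ z) (fderiv ℝ (Function.invFun κ) z v) = v := by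
        have := ContinuousLinearMap.ext_iff.mp hFG v
        simpa using this
      have e2 : fderiv ℝ κ (Function.invFun κ z) (fderiv ℝ (Function.invFun κ) z w) = w := by
        have := ContinuousLinearMap.ext_iff.mp hFG w
        simpa using this
      rw [e1, e2] at h
      exact h.symm
    · intro n hn
      obtain ⟨P, hP⟩ := invPoly d n hn
      obtain ⟨M, hMnn, hM⟩ := boundAll hκ n
      exact ⟨P.eval M, fun z => hP κ hκ M hM z⟩
  refine ⟨part1, part2, ?_, ?_, part5, part6⟩
  · intro κ hκ z
    refine ⟨fderiv_FG hκ.toIsCanonical z, fderiv_GF hκ.toIsCanonical z, ?_⟩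
    intro v w
    have hFG := fderiv_FG hκ.toIsCanonical z
    have hv : fderiv ℝ κ (Function.invFun κ z) (fderiv ℝ (Function.invFun κ) z v) = v := by
      have := ContinuousLinearMap.ext_iff.mp hFG v
      simpa using this
    set a := fderiv ℝ (Function.invFun κ) z v with ha
    calc dotPS a w
        = -dotPS a (-w) := by rw [dotPS_neg_right, neg_neg]
      _ = -dotPS a (Jlin (Jlin w)) := by rw [Jlin_Jlin]
      _ = -symForm d a (Jlin w) := by rw [symForm_eq]
      _ = -symForm d (fderiv ℝ κ (Function.invFun κ z) a)
            (fderiv ℝ κ (Function.invFun κ z) (Jlin w)) := by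
          rw [hκ.symp (Function.invFun κ z) a (Jlin w)]
      _ = -dotPS (fderiv ℝ κ (Function.invFun κ z) a)
            (Jlin (fderiv ℝ κ (Function.invFun κ z) (Jlin w))) := by rw [symForm_eq]
      _ = dotPS (Jlin (fderiv ℝ κ (Function.invFun κ z) a))
            (fderiv ℝ κ (Function.invFun κ z) (Jlin w)) := by
          rw [dotPS_J_left]
      _ = dotPS (Jlin v) (fderiv ℝ κ (Function.invFun κ z) (Jlin w)) := by rw [hv]
  · intro κ hκ
    have hsurj : Function.Surjective (Function.invFun κ) := fun w =>
      ⟨κ w, Function.leftInverse_invFun hκ.bij.1 w⟩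
    have hfrob : ∀ z, frob (Jac (Function.invFun κ) z) = frob (Jac κ (Function.invFun κ z)) := by
      intro z
      rw [Jac_eq, Jac_eq, fderiv_inv_eq hκ.toIsCanonical z, matOf_Bop, frob_conj]
    calc (⨆ z : PS d, frob (Jac (Function.invFun κ) z))
        = ⨆ z : PS d, frob (Jac κ (Function.invFun κ z)) := by
          exact iSup_congr hfrob
      _ = ⨆ w : PS d, frob (Jac κ w) := hsurj.iSup_comp (fun w => frob (Jac κ w))
end
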